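/- Let M be a complex μ×μ matrix and suppose the subgroup of GL(μ,ℂ) generated by the diagonal torus U(1)^μ (diagonal matrices with unit-modulus entries) and the real special orthogonal group SO(μ) is considered. Then this generated subgroup equals the full unitary group U(μ). -/

import Mathlib

/-!
Left multiplication by a diagonal phase matrix makes the first column of a unitary `U` real and
nonnegative, and a Householder reflection then maps that column to `e₀`. Reflections have
determinant `-1`, but every real orthogonal matrix still lies in the generated group, since the sign
changes `diag(±1, 1, …, 1)` belong to the torus. The resulting unitary fixes `e₀`, so it is
block diagonal `diag(1, V)` with `V` unitary, and induction on the size applies to `V`.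
-/

open Matrix

namespace Matrix

section Householder

variable {ι K : Type*} [Fintype ι] [DecidableEq ι] [Field K]

def householder (u : ι → K) : Matrix ι ι K :=
  1 - (2 / (u ⬝ᵥ u)) • vecMulVec u u

lemma transpose_householder (u : ι → K) : (householder u)ᵀ = householder u := by
  simp [householder, transpose_vecMulVec]

lemma householder_mul_self {u : ι → K} (hu : u ⬝ᵥ u ≠ 0) :
    householder u * householder u = 1 := by
  have hcoeff : 2 / (u ⬝ᵥ u) * (2 / (u ⬝ᵥ u)) * (u ⬝ᵥ u) = 2 / (u ⬝ᵥ u) + 2 / (u ⬝ᵥ u) := by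
    field_simp; ring
  simp only [householder, sub_mul, mul_sub, one_mul, mul_one, smul_mul_smul_comm,
    vecMulVec_mul_vecMulVec, vecMulVec_smul, smul_smul, hcoeff, add_smul]
  abel

lemma householder_mulVec (u x : ι → K) :
    householder u *ᵥ x = x - (2 / (u ⬝ᵥ u) * (u ⬝ᵥ x)) • u := by
  simp [householder, sub_mulVec, smul_mulVec, vecMulVec_mulVec, smul_smul]

lemma householder_sub_mulVec {v w : ι → K} (h : v ⬝ᵥ v = w ⬝ᵥ w)
    (hvw : (v - w) ⬝ᵥ (v - w) ≠ 0) : householder (v - w) *ᵥ v = w := by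
  have hnorm : (v - w) ⬝ᵥ (v - w) = 2 * ((v - w) ⬝ᵥ v) := by
    simp only [sub_dotProduct, dotProduct_sub, dotProduct_comm w v, h]; ring
  rw [householder_mulVec, hnorm, div_mul_eq_mul_div, div_self (hnorm ▸ hvw), one_smul,
    sub_sub_cancel]

lemma exists_mem_orthogonalGroup_mulVec_eq {v w : ι → ℝ} (h : v ⬝ᵥ v = w ⬝ᵥ w) :
    ∃ B ∈ orthogonalGroup ι ℝ, B *ᵥ v = w := by
  by_cases hvw : v = w
  · exact ⟨1, one_mem _, by rw [one_mulVec, hvw]⟩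
  have hu : (v - w) ⬝ᵥ (v - w) ≠ 0 := by
    rwa [Ne, dotProduct_self_eq_zero, sub_eq_zero]
  refine ⟨householder (v - w), ?_, householder_sub_mulVec h hu⟩
  rw [mem_orthogonalGroup_iff', transpose_householder, householder_mul_self hu]

end Householder

section BlockDiagOne

variable {α : Type*} {n : ℕ}

def blockDiagOne [Zero α] [One α] (X : Matrix (Fin n) (Fin n) α) :
    Matrix (Fin (n + 1)) (Fin (n + 1)) α :=
  of (Fin.cons (Fin.cons 1 0) fun i => Fin.cons 0 (X i))

section Entries

variable [Zero α] [One α] (X : Matrix (Fin n) (Fin n) α)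

@[simp] lemma blockDiagOne_zero_zero : blockDiagOne X 0 0 = 1 := rfl
@[simp] lemma blockDiagOne_zero_succ (j : Fin n) : blockDiagOne X 0 j.succ = 0 := rfl
@[simp] lemma blockDiagOne_succ_zero (i : Fin n) : blockDiagOne X i.succ 0 = 0 := rfl
@[simp] lemma blockDiagOne_succ_succ (i j : Fin n) : blockDiagOne X i.succ j.succ = X i j := rfl

@[simp] lemma submatrix_succ_succ_blockDiagOne :
    (blockDiagOne X).submatrix Fin.succ Fin.succ = X := rfl

lemma blockDiagOne_injective : Function.Injective (blockDiagOne (α := α) (n := n)) :=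
  fun _ _ h => ext fun i j => by simpa using congr_fun₂ h i.succ j.succ

lemma blockDiagOne_map {β : Type*} [Zero β] [One β] (f : α → β) (h0 : f 0 = 0) (h1 : f 1 = 1) :
    (blockDiagOne X).map f = blockDiagOne (X.map f) := by
  ext i j; cases i using Fin.cases <;> cases j using Fin.cases <;> simp [h0, h1]

lemma blockDiagOne_diagonal (d : Fin n → α) :
    blockDiagOne (diagonal d) = diagonal (Fin.cons 1 d) := by
  ext i j
  cases i using Fin.cases <;> cases j using Fin.cases <;>
    simp [diagonal_apply, Fin.succ_ne_zero, (Fin.succ_ne_zero _).symm]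

lemma blockDiagOne_one : blockDiagOne (1 : Matrix (Fin n) (Fin n) α) = 1 := by
  ext i j
  cases i using Fin.cases <;> cases j using Fin.cases <;>
    simp [one_apply, Fin.succ_ne_zero, (Fin.succ_ne_zero _).symm]

end Entries

lemma blockDiagOne_mul [NonAssocSemiring α] (X Y : Matrix (Fin n) (Fin n) α) :
    blockDiagOne (X * Y) = blockDiagOne X * blockDiagOne Y := by
  ext i j
  cases i using Fin.cases <;> cases j using Fin.cases <;> simp [mul_apply, Fin.sum_univ_succ]

lemma blockDiagOne_conjTranspose [NonAssocSemiring α] [StarRing α]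
    (X : Matrix (Fin n) (Fin n) α) : (blockDiagOne X)ᴴ = blockDiagOne Xᴴ := by
  ext i j; cases i using Fin.cases <;> cases j using Fin.cases <;> simp

lemma det_blockDiagOne [CommRing α] (X : Matrix (Fin n) (Fin n) α) :
    (blockDiagOne X).det = X.det := by
  rw [det_succ_row_zero, Fin.sum_univ_succ]
  simp

variable [CommRing α] [StarRing α]

def blockDiagOneStarHom :
    Matrix (Fin n) (Fin n) α →⋆* Matrix (Fin (n + 1)) (Fin (n + 1)) α where
  toFun := blockDiagOne
  map_one' := blockDiagOne_one
  map_mul' := blockDiagOne_mul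
  map_star' X := (blockDiagOne_conjTranspose X).symm

lemma exists_eq_blockDiagOne {U : Matrix (Fin (n + 1)) (Fin (n + 1)) α}
    (hU : U ∈ unitaryGroup _ α) (hU0 : (fun i => U i 0) = Pi.single 0 1) :
    ∃ V ∈ unitaryGroup (Fin n) α, blockDiagOne V = U := by
  have hrow : ∀ j, U 0 j = (Pi.single 0 1 : Fin (n + 1) → α) j := fun j => by
    simpa [mul_apply, congr_fun hU0, Pi.single_apply, apply_ite star, one_apply, eq_comm] using
      congr_fun₂ (mem_unitaryGroup_iff'.1 hU) 0 j
  have hblock : blockDiagOne (U.submatrix Fin.succ Fin.succ) = U := by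
    ext i j
    cases i using Fin.cases <;> cases j using Fin.cases <;> simp [congr_fun hU0, hrow]
  refine ⟨_, ?_, hblock⟩
  rw [mem_unitaryGroup_iff', star_eq_conjTranspose]
  apply blockDiagOne_injective
  rw [blockDiagOne_mul, ← blockDiagOne_conjTranspose, hblock, blockDiagOne_one,
    ← star_eq_conjTranspose, ← mem_unitaryGroup_iff']
  exact hU

end BlockDiagOne

end Matrix

lemma Complex.exists_norm_eq_one_mul_eq_norm (z : ℂ) : ∃ c : ℂ, ‖c‖ = 1 ∧ c * z = ‖z‖ := by
  refine ⟨exp (-arg z * I), by exact_mod_cast norm_exp_ofReal_mul_I (-arg z), ?_⟩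
  conv_lhs => rw [← norm_mul_exp_arg_mul_I z, mul_left_comm, ← exp_add]
  simp

namespace Unitary

variable {R : Type*} [Monoid R] [StarMul R]

lemma coe_range_toUnits : ((toUnits : unitary R →* Rˣ).range : Set Rˣ) = Units.val ⁻¹' unitary R :=
  Set.ext fun A => ⟨by rintro ⟨U, rfl⟩; exact U.2, fun h => ⟨⟨A, h⟩, Units.ext rfl⟩⟩

lemma toUnits_image_preimage_val {s : Set R} (hs : s ⊆ unitary R) :
    toUnits '' (Subtype.val ⁻¹' s : Set (unitary R)) = Units.val ⁻¹' s :=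
  Set.ext fun A => ⟨by rintro ⟨U, hU, rfl⟩; exact hU, fun h => ⟨⟨A, hs h⟩, h, Units.ext rfl⟩⟩

end Unitary

namespace Matrix

section UnitaryGenerators

variable {ι : Type*} [Fintype ι] [DecidableEq ι]

lemma diagonal_mem_unitaryGroup {d : ι → ℂ} (hd : ∀ i, ‖d i‖ = 1) :
    diagonal d ∈ unitaryGroup ι ℂ := by
  rw [mem_unitaryGroup_iff', star_eq_conjTranspose, diagonal_conjTranspose, diagonal_mul_diagonal,
    ← diagonal_one]
  congr 1
  ext i
  simp [Complex.conj_mul', hd i]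

lemma map_ofReal_mem_unitaryGroup {B : Matrix ι ι ℝ} (hB : B ∈ orthogonalGroup ι ℝ) :
    B.map (↑) ∈ unitaryGroup ι ℂ := by
  rw [mem_unitaryGroup_iff', star_eq_conjTranspose,
    ← conjTranspose_map _ fun x => (Complex.conj_ofReal x).symm]
  change Bᴴ.map Complex.ofRealHom * B.map Complex.ofRealHom = 1
  rw [← Matrix.map_mul, conjTranspose_eq_transpose_of_trivial, (mem_orthogonalGroup_iff' _ _).1 hB,
    Matrix.map_one _ (map_zero _) (map_one _)]

variable (ι)

def unitDiagonal : Set (Matrix ι ι ℂ) :=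
  {M | ∃ d : ι → ℂ, (∀ i, ‖d i‖ = 1) ∧ M = diagonal d}

def realSpecialOrthogonal : Set (Matrix ι ι ℂ) :=
  {M | ∃ B : Matrix ι ι ℝ, Bᵀ * B = 1 ∧ B.det = 1 ∧ M = B.map (↑)}

def torusOrthogonalSubgroup : Subgroup (unitaryGroup ι ℂ) :=
  Subgroup.closure (Subtype.val ⁻¹' (unitDiagonal ι ∪ realSpecialOrthogonal ι))

variable {ι}

lemma unitDiagonal_union_realSpecialOrthogonal_subset :
    unitDiagonal ι ∪ realSpecialOrthogonal ι ⊆ unitaryGroup ι ℂ := by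
  rintro _ (⟨d, hd, rfl⟩ | ⟨B, hB, -, rfl⟩)
  · exact diagonal_mem_unitaryGroup hd
  · exact map_ofReal_mem_unitaryGroup ((mem_orthogonalGroup_iff' _ _).2 hB)

lemma ofReal_mem_torusOrthogonalSubgroup {B : Matrix ι ι ℝ} (hB : B ∈ orthogonalGroup ι ℝ) :
    (⟨B.map (↑), map_ofReal_mem_unitaryGroup hB⟩ : unitaryGroup ι ℂ) ∈
      torusOrthogonalSubgroup ι := by
  rcases isEmpty_or_nonempty ι with _ | ⟨⟨i₀⟩⟩
  · rw [Subsingleton.elim (⟨B.map (↑), map_ofReal_mem_unitaryGroup hB⟩ : unitaryGroup ι ℂ) 1]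
    exact one_mem _
  have hdet : B.det * B.det = 1 := by simpa using (det_of_mem_unitary hB).1
  set f : ι → ℝ := Pi.mulSingle i₀ B.det
  have hf : ∀ i, f i * f i = 1 := fun i => by
    rw [← Pi.mul_apply, ← Pi.mulSingle_mul, hdet, Pi.mulSingle_one, Pi.one_apply]
  have hF : diagonal f ∈ orthogonalGroup ι ℝ := by
    simp only [mem_orthogonalGroup_iff', diagonal_transpose, diagonal_mul_diagonal, hf,
      diagonal_one]
  have hBF : B * diagonal f ∈ orthogonalGroup ι ℝ := mul_mem hB hF
  have hf_norm : ∀ i, ‖(f i : ℂ)‖ = 1 := fun i => by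
    rcases mul_self_eq_one_iff.1 (hf i) with h | h <;> simp [h]
  have hsplit : B.map ((↑) : ℝ → ℂ) = (B * diagonal f).map (↑) * diagonal fun i => (f i : ℂ) := by
    change B.map Complex.ofRealHom =
      (B * diagonal f).map Complex.ofRealHom * diagonal fun i => Complex.ofRealHom (f i)
    rw [← diagonal_map (map_zero _), ← Matrix.map_mul, Matrix.mul_assoc, diagonal_mul_diagonal]
    simp only [hf, diagonal_one, Matrix.mul_one]
  rw [show (⟨B.map (↑), map_ofReal_mem_unitaryGroup hB⟩ : unitaryGroup ι ℂ) =
      ⟨_, map_ofReal_mem_unitaryGroup hBF⟩ * ⟨_, diagonal_mem_unitaryGroup hf_norm⟩ from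
    Subtype.ext hsplit]
  refine mul_mem (Subgroup.subset_closure (Or.inr ⟨_, (mem_orthogonalGroup_iff' _ _).1 hBF, ?_, rfl⟩))
    (Subgroup.subset_closure (Or.inl ⟨_, hf_norm, rfl⟩))
  rw [det_mul, det_diagonal, Fintype.prod_pi_mulSingle', hdet]

lemma exists_mem_torusOrthogonalSubgroup_mulVec_eq_single {x : ι → ℂ} (hx : star x ⬝ᵥ x = 1)
    (i₀ : ι) : ∃ P ∈ torusOrthogonalSubgroup ι, (P : Matrix ι ι ℂ) *ᵥ x = Pi.single i₀ 1 := by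
  choose d hd hdx using fun i => Complex.exists_norm_eq_one_mul_eq_norm (x i)
  set v : ι → ℝ := fun i => ‖x i‖
  have hv : v ⬝ᵥ v = Pi.single i₀ 1 ⬝ᵥ Pi.single i₀ 1 := by
    have h : ((v ⬝ᵥ v : ℝ) : ℂ) = star x ⬝ᵥ x := by
      simp [v, dotProduct, Complex.conj_mul', sq]
    rw [single_dotProduct, Pi.single_eq_same, one_mul]
    exact_mod_cast h.trans hx
  obtain ⟨B, hB, hBv⟩ := exists_mem_orthogonalGroup_mulVec_eq hv
  refine ⟨⟨_, map_ofReal_mem_unitaryGroup hB⟩ * ⟨diagonal d, diagonal_mem_unitaryGroup hd⟩,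
    mul_mem (ofReal_mem_torusOrthogonalSubgroup hB) (Subgroup.subset_closure (Or.inl ⟨d, hd, rfl⟩)),
    ?_⟩
  have hdx' : diagonal d *ᵥ x = fun i => (v i : ℂ) := funext fun i => by rw [mulVec_diagonal, hdx]
  rw [Submonoid.coe_mul, ← mulVec_mulVec, hdx']
  ext i
  have := Complex.ofRealHom.map_mulVec B v i
  rw [hBv] at this
  exact this.symm.trans (by simp [Pi.single_apply])

end UnitaryGenerators

lemma map_blockDiagOne_torusOrthogonalSubgroup_le (n : ℕ) :
    (torusOrthogonalSubgroup (Fin n)).map (Unitary.map blockDiagOneStarHom).toMonoidHom ≤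
      torusOrthogonalSubgroup (Fin (n + 1)) := by
  rw [torusOrthogonalSubgroup, MonoidHom.map_closure]
  refine Subgroup.closure_mono ?_
  rintro _ ⟨U, ⟨d, hd, hU⟩ | ⟨B, hB, hdet, hU⟩, rfl⟩
  · refine Or.inl ⟨Fin.cons 1 d, Fin.cases (by simp) hd, ?_⟩
    simp [blockDiagOneStarHom, hU, blockDiagOne_diagonal]
  · refine Or.inr ⟨blockDiagOne B, ?_, by rw [det_blockDiagOne, hdet], ?_⟩
    · rw [← conjTranspose_eq_transpose_of_trivial, blockDiagOne_conjTranspose, ← blockDiagOne_mul,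
        conjTranspose_eq_transpose_of_trivial, hB, blockDiagOne_one]
    · simp [blockDiagOneStarHom, hU, blockDiagOne_map]

theorem torusOrthogonalSubgroup_eq_top : ∀ n, torusOrthogonalSubgroup (Fin n) = ⊤
  | 0 => Subsingleton.elim _ _
  | n + 1 => by
    refine eq_top_iff.2 fun U _ => ?_
    have hcol : star (fun i => U i 0) ⬝ᵥ (fun i => U i 0) = 1 := by
      simpa [mul_apply, dotProduct] using congr_fun₂ (mem_unitaryGroup_iff'.1 U.2) 0 0
    obtain ⟨P, hP, hPU⟩ := exists_mem_torusOrthogonalSubgroup_mulVec_eq_single hcol 0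
    obtain ⟨V, hV, hVU⟩ := exists_eq_blockDiagOne (P * U).2 (by rw [← hPU]; rfl)
    have hPU_mem : P * U ∈ torusOrthogonalSubgroup (Fin (n + 1)) :=
      map_blockDiagOne_torusOrthogonalSubgroup_le n
        ⟨⟨V, hV⟩, torusOrthogonalSubgroup_eq_top n ▸ Subgroup.mem_top _, Subtype.ext hVU⟩
    simpa using mul_mem (inv_mem hP) hPU_mem

end Matrix

theorem stmt1 (μ : ℕ) :
    (Subgroup.closure
        ({ A : GL (Fin μ) ℂ | ∃ d : Fin μ → ℂ, (∀ i, ‖d i‖ = 1) ∧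
            (A : Matrix (Fin μ) (Fin μ) ℂ) = Matrix.diagonal d }
          ∪ { A : GL (Fin μ) ℂ | ∃ B : Matrix (Fin μ) (Fin μ) ℝ, Bᵀ * B = 1 ∧ B.det = 1 ∧
            (A : Matrix (Fin μ) (Fin μ) ℂ) = B.map Complex.ofReal }) : Set (GL (Fin μ) ℂ))
      = { A : GL (Fin μ) ℂ | (A : Matrix (Fin μ) (Fin μ) ℂ) ∈ Matrix.unitaryGroup (Fin μ) ℂ } := by
  change (Subgroup.closure (Units.val ⁻¹' (unitDiagonal (Fin μ) ∪ realSpecialOrthogonal (Fin μ))) :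
    Set (GL (Fin μ) ℂ)) = Units.val ⁻¹' unitaryGroup (Fin μ) ℂ
  rw [← Unitary.toUnits_image_preimage_val unitDiagonal_union_realSpecialOrthogonal_subset,
    ← MonoidHom.map_closure, ← torusOrthogonalSubgroup, torusOrthogonalSubgroup_eq_top,
    ← MonoidHom.range_eq_map, Unitary.coe_range_toUnits]
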